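/- The map f sending each 1324-avoiding permutation p of {1,...,n} to the pair (w(p), z(p)) of type-words is injective, where w(p)_i is the type (A, B, C, or D) of the entry in position i and z(p)_i is the type of the entry with value i. -/

import Mathlib

/-!
Suppose `p` and `q` have the same words `w` and `z`. Equal `w` means equal colours at every
position, and one shows `p i = q i` for red `i` from left to right and for blue `i` from right to
left. Let `k` be the position in `p` of the value `q i`; equal `z` means `k` has the same type as
`i`. By induction `k` is not on the already treated side of `i`, and if it is on the other side,
the type of `k` compares `q i = p k` with `p i`: directly for `A` and `D`, for `B` because the red
entries contain no 132, and for `C` because the blue entries of a 1324-avoiding permutation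
contain no 213. Exchanging `p` and `q` gives the reverse inequality.
-/

inductive Letter | A | B | C | D
deriving DecidableEq

def NoCB (w : List Letter) : Prop :=
  List.Chain' (fun a b => ¬(a = Letter.C ∧ b = Letter.B)) w

noncomputable def hword (n : ℕ) : ℕ :=
  Nat.card {w : List Letter // w.length = n ∧ NoCB w}
def redCond (p : ℕ → ℕ) (c : List Bool) (i : ℕ) : Bool :=
  decide (¬ ∃ j < i, ∃ k < i, j < k ∧ c.getD j false = true ∧ c.getD k false = true ∧
      p j < p i ∧ p i < p k) &&
  decide (¬ ∃ j < i, c.getD j false = false ∧ p j < p i)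

def colorsAux (p : ℕ → ℕ) : ℕ → List Bool
  | 0 => []
  | i+1 => colorsAux p i ++ [redCond p (colorsAux p i) i]

/-- `isRed p i = true` iff the greedy procedure colors the entry in position `i` red. -/
def isRed (p : ℕ → ℕ) (i : ℕ) : Bool := (colorsAux p (i+1)).getD i false

/-- The type of the entry in position `i` of a permutation of `{0,...,n-1}`:
`A` = red left-to-right minimum of the red subsequence, `B` = other red,
`D` = blue right-to-left maximum of the blue subsequence, `C` = other blue. -/
def typeOf (n : ℕ) (p : ℕ → ℕ) (i : ℕ) : Letter :=
  if isRed p i then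
    if ∀ j < i, isRed p j = true → p i < p j then Letter.A else Letter.B
  else
    if ∀ j < n, i < j → isRed p j = false → p j < p i then Letter.D else Letter.C

def toNatFun {n : ℕ} (p : Equiv.Perm (Fin n)) : ℕ → ℕ :=
  fun i => if h : i < n then (p ⟨i, h⟩ : ℕ) else i

def Avoids1324 {n : ℕ} (p : Equiv.Perm (Fin n)) : Prop :=
  ¬ ∃ i₁ i₂ i₃ i₄ : Fin n, i₁ < i₂ ∧ i₂ < i₃ ∧ i₃ < i₄ ∧
    p i₁ < p i₃ ∧ p i₃ < p i₂ ∧ p i₂ < p i₄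

/-- The word `w(p)`: types by position. -/
def wWord {n : ℕ} (p : Equiv.Perm (Fin n)) (i : Fin n) : Letter :=
  typeOf n (toNatFun p) i

/-- The word `z(p)`: types by value. -/
def zWord {n : ℕ} (p : Equiv.Perm (Fin n)) (v : Fin n) : Letter :=
  typeOf n (toNatFun p) (p.symm v)

open Set

section GreedyColoring

variable {f : ℕ → ℕ}

theorem isRed_eq_redCond (f : ℕ → ℕ) (i : ℕ) : isRed f i = redCond f (colorsAux f i) i := by
  have : (colorsAux f i).length = i := by
    induction i with
    | zero => rfl
    | succ i ih => simp [colorsAux, ih]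
  simp [isRed, colorsAux, List.getD_eq_getElem?_getD, this]

theorem colorsAux_eq_map (f : ℕ → ℕ) (i : ℕ) :
    colorsAux f i = (List.range i).map (isRed f) := by
  induction i with
  | zero => rfl
  | succ i ih =>
    rw [colorsAux, ih, List.range_succ, List.map_append, ← ih, ← isRed_eq_redCond]
    rfl

theorem isRed_iff {i : ℕ} : isRed f i = true ↔
    (¬ ∃ j < i, ∃ k < i, j < k ∧ isRed f j = true ∧ isRed f k = true ∧
      f j < f i ∧ f i < f k) ∧ ¬ ∃ j < i, isRed f j = false ∧ f j < f i := by
  rw [isRed_eq_redCond, colorsAux_eq_map, redCond]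
  simp +contextual [List.getD_eq_getElem?_getD]

theorem not_red_132 {j i k : ℕ} (hji : j < i) (hik : i < k) (hj : isRed f j = true)
    (hi : isRed f i = true) (hk : isRed f k = true) (hjk : f j < f k) (hki : f k < f i) :
    False :=
  (isRed_iff.1 hk).1 ⟨j, hji.trans hik, i, hik, hji, hj, hi, hjk, hki⟩

theorem apply_le_of_red_of_blue {b r : ℕ} (hbr : b < r) (hb : isRed f b = false)
    (hr : isRed f r = true) : f r ≤ f b :=
  not_lt.1 fun hlt => (isRed_iff.1 hr).2 ⟨b, hbr, hb, hlt⟩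

/-- A blue entry is either the `2` of a `132` whose `1` and `3` are red, or lies above an earlier
blue entry; descending through the latter ends in the former. -/
theorem exists_red_13_of_blue {b : ℕ} (hb : isRed f b = false) :
    ∃ j k c, j < k ∧ k < c ∧ c ≤ b ∧ isRed f j = true ∧ isRed f k = true ∧
      f j < f c ∧ f c < f k ∧ f c ≤ f b := by
  induction b using Nat.strong_induction_on with
  | _ b ih =>
    have h := mt (isRed_iff (f := f) (i := b)).2 (by simp [hb])
    rw [not_and_or, not_not, not_not] at h
    rcases h with ⟨j, -, k, hkb, hjk, hj, hk, hjb, hbk⟩ | ⟨a, hab, ha, hfab⟩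
    · exact ⟨j, k, b, hjk, hkb, le_rfl, hj, hk, hjb, hbk, le_rfl⟩
    · obtain ⟨j, k, c, hjk, hkc, hca, hj, hk, hjc, hck, hfca⟩ := ih a hab ha
      exact ⟨j, k, c, hjk, hkc, hca.trans hab.le, hj, hk, hjc, hck, hfca.trans hfab.le⟩

end GreedyColoring

section Types

variable {n : ℕ} {f : ℕ → ℕ} {i : ℕ}

theorem isRed_iff_typeOf : isRed f i = true ↔ typeOf n f i = .A ∨ typeOf n f i = .B := by
  unfold typeOf; split_ifs <;> simp_all

theorem isRed_eq_false_iff_typeOf :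
    isRed f i = false ↔ typeOf n f i = .C ∨ typeOf n f i = .D := by
  unfold typeOf; split_ifs <;> simp_all

theorem typeOf_eq_A_iff :
    typeOf n f i = .A ↔ isRed f i = true ∧ ∀ j < i, isRed f j = true → f i < f j := by
  unfold typeOf; split_ifs <;> simp_all

theorem typeOf_eq_B_iff :
    typeOf n f i = .B ↔ isRed f i = true ∧ ∃ j < i, isRed f j = true ∧ f j ≤ f i := by
  unfold typeOf; split_ifs <;> simp_all

theorem typeOf_eq_C_iff : typeOf n f i = .C ↔
    isRed f i = false ∧ ∃ j < n, i < j ∧ isRed f j = false ∧ f i ≤ f j := by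
  unfold typeOf; split_ifs <;> simp_all

theorem typeOf_eq_D_iff : typeOf n f i = .D ↔
    isRed f i = false ∧ ∀ j < n, i < j → isRed f j = false → f j < f i := by
  unfold typeOf; split_ifs <;> simp_all

end Types

def Avoids1324On (n : ℕ) (f : ℕ → ℕ) : Prop :=
  ∀ ⦃a b c d⦄, a < b → b < c → c < d → d < n →
    f a < f c → f c < f b → f b < f d → False

/-- With `j k c` the pattern given by `exists_red_13_of_blue` below `y`, either `j k c z` or
`j x y z` is a 1324. -/
theorem Avoids1324On.not_blue_213 {n : ℕ} {f : ℕ → ℕ} (hf : Avoids1324On n f) {x y z : ℕ}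
    (hxy : x < y) (hyz : y < z) (hzn : z < n) (hx : isRed f x = false)
    (hy : isRed f y = false) (hyx : f y < f x) (hxz : f x < f z) : False := by
  obtain ⟨j, k, c, hjk, hkc, hcy, hj, hk, hjc, hck, hfcy⟩ := exists_red_13_of_blue hy
  rcases lt_or_ge (f k) (f z) with hkz | hzk
  · exact hf hjk hkc (hcy.trans_lt hyz) hzn hjc hck hkz
  · have hkx : k < x := by
      rcases lt_trichotomy k x with hkx | rfl | hxk
      · exact hkx
      · simp [hk] at hx
      · exact absurd (apply_le_of_red_of_blue hxk hx hk) (by omega)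
    exact hf (hjk.trans hkx) hxy hyz hzn (by omega) hyx hxz

/-- `f` and `g` are permutations of `{0, …, n - 1}` with the same word `w` (`typeOf_eq`) and the
same word `z` (`typeOf_eq_of_apply_eq`). -/
structure SameTypeWords (n : ℕ) (f g : ℕ → ℕ) : Prop where
  bijOn_left : BijOn f (Iio n) (Iio n)
  bijOn_right : BijOn g (Iio n) (Iio n)
  typeOf_eq : ∀ i < n, typeOf n f i = typeOf n g i
  typeOf_eq_of_apply_eq : ∀ i < n, ∀ k < n, f k = g i → typeOf n f k = typeOf n g i

namespace SameTypeWords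

variable {n : ℕ} {f g : ℕ → ℕ}

theorem symm (h : SameTypeWords n f g) : SameTypeWords n g f :=
  ⟨h.bijOn_right, h.bijOn_left, fun i hi => (h.typeOf_eq i hi).symm,
    fun i hi k hk hgk => (h.typeOf_eq_of_apply_eq k hk i hi hgk.symm).symm⟩

theorem isRed_eq (h : SameTypeWords n f g) {i : ℕ} (hi : i < n) : isRed g i = isRed f i :=
  Bool.eq_iff_iff.2 (by rw [isRed_iff_typeOf, isRed_iff_typeOf, h.typeOf_eq i hi])

theorem exists_apply_eq_typeOf_eq (h : SameTypeWords n f g) {i : ℕ} (hi : i < n) :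
    ∃ k < n, f k = g i ∧ typeOf n f k = typeOf n f i := by
  obtain ⟨k, hk, hki⟩ := h.bijOn_left.surjOn (h.bijOn_right.mapsTo hi)
  exact ⟨k, hk, hki, (h.typeOf_eq_of_apply_eq i hi k hk hki).trans (h.typeOf_eq i hi).symm⟩

theorem eq_of_apply_eq (h : SameTypeWords n f g) {k i : ℕ} (hk : k < n) (hi : i < n)
    (hkk : f k = g k) (hki : f k = g i) : k = i :=
  h.bijOn_right.injOn hk hi (hkk.symm.trans hki)

theorem le_of_typeOf_eq_A (h : SameTypeWords n f g) {i : ℕ} (hi : i < n)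
    (hA : typeOf n f i = .A) (IH : ∀ j < i, isRed f j = true → f j = g j) : g i ≤ f i := by
  obtain ⟨k, hk, hki, hAk⟩ := h.exists_apply_eq_typeOf_eq hi
  rw [hA, typeOf_eq_A_iff] at hAk
  rcases lt_trichotomy k i with hlt | rfl | hgt
  · exact absurd (h.eq_of_apply_eq hk hi (IH k hlt hAk.1) hki) hlt.ne
  · exact hki.ge
  · exact hki ▸ (hAk.2 i hgt (typeOf_eq_A_iff.1 hA).1).le

theorem le_of_typeOf_eq_B (h : SameTypeWords n f g) {i : ℕ} (hi : i < n)
    (hB : typeOf n f i = .B) (IH : ∀ j < i, isRed f j = true → f j = g j) : f i ≤ g i := by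
  obtain ⟨k, hk, hki, hBk⟩ := h.exists_apply_eq_typeOf_eq hi
  rw [hB, typeOf_eq_B_iff] at hBk
  rcases lt_trichotomy k i with hlt | rfl | hgt
  · exact absurd (h.eq_of_apply_eq hk hi (IH k hlt hBk.1) hki) hlt.ne
  · exact hki.le
  · obtain ⟨-, j, hji, hj, hgji⟩ := typeOf_eq_B_iff.1 (h.typeOf_eq i hi ▸ hB)
    have hj : isRed f j = true := h.isRed_eq (hji.trans hi) ▸ hj
    have hgji : g j < g i :=
      hgji.lt_of_ne fun he => hji.ne (h.bijOn_right.injOn (hji.trans hi) hi he)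
    refine not_lt.1 fun hgi =>
      not_red_132 hji hgt hj (typeOf_eq_B_iff.1 hB).1 hBk.1 ?_ (hki ▸ hgi)
    rw [IH j hji hj, hki]
    exact hgji

theorem le_of_typeOf_eq_C (h : SameTypeWords n f g) (hf : Avoids1324On n f) {i : ℕ}
    (hi : i < n) (hC : typeOf n f i = .C)
    (IH : ∀ j, i < j → j < n → isRed f j = false → f j = g j) : g i ≤ f i := by
  obtain ⟨k, hk, hki, hCk⟩ := h.exists_apply_eq_typeOf_eq hi
  rw [hC, typeOf_eq_C_iff] at hCk
  rcases lt_trichotomy k i with hlt | rfl | hgt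
  · obtain ⟨-, c, hcn, hic, hc, hgic⟩ := typeOf_eq_C_iff.1 (h.typeOf_eq i hi ▸ hC)
    have hc : isRed f c = false := h.isRed_eq hcn ▸ hc
    have hgic : g i < g c := hgic.lt_of_ne fun he => hic.ne (h.bijOn_right.injOn hi hcn he)
    refine not_lt.1 fun hfi =>
      hf.not_blue_213 hlt hic hcn hCk.1 (typeOf_eq_C_iff.1 hC).1 (hki ▸ hfi) ?_
    rw [IH c hic hcn hc, hki]
    exact hgic
  · exact hki.ge
  · exact absurd (h.eq_of_apply_eq hk hi (IH k hgt hk hCk.1) hki) hgt.ne'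

theorem le_of_typeOf_eq_D (h : SameTypeWords n f g) {i : ℕ} (hi : i < n)
    (hD : typeOf n f i = .D) (IH : ∀ j, i < j → j < n → isRed f j = false → f j = g j) :
    f i ≤ g i := by
  obtain ⟨k, hk, hki, hDk⟩ := h.exists_apply_eq_typeOf_eq hi
  rw [hD, typeOf_eq_D_iff] at hDk
  rcases lt_trichotomy k i with hlt | rfl | hgt
  · exact hki ▸ (hDk.2 i hi hlt (typeOf_eq_D_iff.1 hD).1).le
  · exact hki.le
  · exact absurd (h.eq_of_apply_eq hk hi (IH k hgt hk hDk.1) hki) hgt.ne'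

theorem apply_eq_of_red (h : SameTypeWords n f g) {i : ℕ} (hi : i < n)
    (hr : isRed f i = true) : f i = g i := by
  have IH : ∀ j < i, isRed f j = true → f j = g j := fun j hj =>
    apply_eq_of_red h (hj.trans hi)
  have IH' : ∀ j < i, isRed g j = true → g j = f j := fun j hj hr =>
    (IH j hj (h.isRed_eq (hj.trans hi) ▸ hr)).symm
  rcases isRed_iff_typeOf.1 hr with hA | hB
  · exact (h.le_of_typeOf_eq_A hi hA IH).antisymm'
      (h.symm.le_of_typeOf_eq_A hi (h.typeOf_eq i hi ▸ hA) IH')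
  · exact (h.le_of_typeOf_eq_B hi hB IH).antisymm
      (h.symm.le_of_typeOf_eq_B hi (h.typeOf_eq i hi ▸ hB) IH')
termination_by i

theorem apply_eq_of_blue (h : SameTypeWords n f g) (hf : Avoids1324On n f)
    (hg : Avoids1324On n g) {i : ℕ} (hi : i < n) (hb : isRed f i = false) : f i = g i := by
  have IH : ∀ j, i < j → j < n → isRed f j = false → f j = g j := fun j _ hj =>
    apply_eq_of_blue h hf hg hj
  have IH' : ∀ j, i < j → j < n → isRed g j = false → g j = f j := fun j hij hj hb =>
    (IH j hij hj (h.isRed_eq hj ▸ hb)).symm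
  rcases isRed_eq_false_iff_typeOf.1 hb with hC | hD
  · exact (h.le_of_typeOf_eq_C hf hi hC IH).antisymm'
      (h.symm.le_of_typeOf_eq_C hg hi (h.typeOf_eq i hi ▸ hC) IH')
  · exact (h.le_of_typeOf_eq_D hi hD IH).antisymm
      (h.symm.le_of_typeOf_eq_D hi (h.typeOf_eq i hi ▸ hD) IH')
termination_by n - i

theorem apply_eq (h : SameTypeWords n f g) (hf : Avoids1324On n f) (hg : Avoids1324On n g)
    {i : ℕ} (hi : i < n) : f i = g i := by
  cases hr : isRed f i
  · exact h.apply_eq_of_blue hf hg hi hr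
  · exact h.apply_eq_of_red hi hr

end SameTypeWords

section Permutations

variable {n : ℕ} (p : Equiv.Perm (Fin n))

theorem toNatFun_of_lt {i : ℕ} (hi : i < n) : toNatFun p i = p ⟨i, hi⟩ := dif_pos hi

theorem toNatFun_mapsTo : MapsTo (toNatFun p) (Iio n) (Iio n) := fun i hi => by
  rw [toNatFun_of_lt p hi]
  exact (p _).isLt

theorem toNatFun_symm_toNatFun {i : ℕ} (hi : i < n) :
    toNatFun p.symm (toNatFun p i) = i := by
  simp [toNatFun_of_lt _ hi, toNatFun_of_lt _ (p ⟨i, hi⟩).isLt]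

theorem toNatFun_bijOn : BijOn (toNatFun p) (Iio n) (Iio n) :=
  InvOn.bijOn ⟨fun _ hi => toNatFun_symm_toNatFun p hi,
    fun _ hi => by simpa using toNatFun_symm_toNatFun p.symm hi⟩
    (toNatFun_mapsTo p) (toNatFun_mapsTo p.symm)

theorem Avoids1324.toNatFun {p : Equiv.Perm (Fin n)} (hp : Avoids1324 p) :
    Avoids1324On n (toNatFun p) := fun a b c d hab hbc hcd hdn => by
  simp only [toNatFun_of_lt p (hab.trans (hbc.trans (hcd.trans hdn))),
    toNatFun_of_lt p (hbc.trans (hcd.trans hdn)), toNatFun_of_lt p (hcd.trans hdn),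
    toNatFun_of_lt p hdn, Fin.val_fin_lt]
  exact fun h₁ h₂ h₃ => hp ⟨_, _, _, _, hab, hbc, hcd, h₁, h₂, h₃⟩

theorem sameTypeWords_of_wWord_eq_of_zWord_eq {p q : Equiv.Perm (Fin n)}
    (hw : wWord p = wWord q) (hz : zWord p = zWord q) :
    SameTypeWords n (toNatFun p) (toNatFun q) where
  bijOn_left := toNatFun_bijOn p
  bijOn_right := toNatFun_bijOn q
  typeOf_eq i hi := congrFun hw ⟨i, hi⟩
  typeOf_eq_of_apply_eq i hi k hk hki := by
    have hpk : p.symm (q ⟨i, hi⟩) = ⟨k, hk⟩ := by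
      rw [Equiv.symm_apply_eq]
      exact Fin.ext ((toNatFun_of_lt p hk).symm.trans (hki.trans (toNatFun_of_lt q hi))).symm
    simpa [zWord, hpk] using congrFun hz (q ⟨i, hi⟩)

end Permutations

/-- The map p ↦ (w(p), z(p)) is injective on 1324-avoiding permutations. -/
theorem stmt12 {n : ℕ} (p q : Equiv.Perm (Fin n))
    (hp : Avoids1324 p) (hq : Avoids1324 q)
    (hw : wWord p = wWord q) (hz : zWord p = zWord q) : p = q := by
  ext x
  have := (sameTypeWords_of_wWord_eq_of_zWord_eq hw hz).apply_eq hp.toNatFun hq.toNatFun x.isLt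
  rwa [toNatFun_of_lt p x.isLt, toNatFun_of_lt q x.isLt] at this
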